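/- (Integrated dual energy estimate) Let (x,v) be a strong solution on [0,T] of v ∈ ∂φ(x), λẋ + v̇ + v + ∇ψ(x) = 0 a.e., with λ ≥ c₀ > 0. Then for every t ∈ [0,T], ∫₀ᵗ ‖v̇(τ)‖² dτ + ‖v(t)‖² ≤ ‖v₀‖² + ∫₀ᵀ ‖∇ψ(x(τ))‖² dτ. -/

import Mathlib

open MeasureTheory Set Filter
open scoped Topology

variable {H : Type*} [NormedAddCommGroup H] [InnerProductSpace ℝ H] [CompleteSpace H]

/-- `v` belongs to the convex subdifferential of `φ` at `x`. -/
def IsSubdiff (φ : H → EReal) (x v : H) : Prop :=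
  ∀ y : H, φ x + ((inner ℝ v (y - x) : ℝ) : EReal) ≤ φ y

/-- `φ` is proper, convex and lower semicontinuous. -/
def ProperConvexLSC (φ : H → EReal) : Prop :=
  (∀ z, φ z ≠ ⊥) ∧ (∃ z, φ z ≠ ⊤) ∧ LowerSemicontinuous φ ∧
  (∀ z w : H, ∀ a b : ℝ, 0 ≤ a → 0 ≤ b → a + b = 1 →
      φ (a • z + b • w) ≤ (a : EReal) * φ z + (b : EReal) * φ w)

/-- Standing assumptions: `φ` proper convex lsc, `ψ` convex with gradient `ψ'`,
and `φ + ψ` bounded below on `H`. -/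
def Standing (φ : H → EReal) (ψ : H → ℝ) (ψ' : H → H) : Prop :=
  ProperConvexLSC φ ∧
  ConvexOn ℝ Set.univ ψ ∧ (∀ z, HasGradientAt ψ (ψ' z) z) ∧
  (∃ m : ℝ, ∀ z, (m : EReal) ≤ φ z + (ψ z : EReal))

/-- The energy gap `(φ+ψ)(x₀) - inf_H (φ+ψ)` as a real number. -/
noncomputable def Egap (φ : H → EReal) (ψ : H → ℝ) (x₀ : H) : ℝ :=
  ((φ x₀ + (ψ x₀ : EReal)) - sInf (Set.range fun z => φ z + (ψ z : EReal))).toReal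

/-- `(x, v)` is a strong (absolutely continuous) solution on `[0, T]` of
`v ∈ ∂φ(x)`, `λ ẋ + v̇ + v + ∇ψ(x) = 0` a.e., with a.e. derivatives `x'`, `v'`. -/
structure StrongSol (φ : H → EReal) (ψ' : H → H) (lam : ℝ → ℝ) (T : ℝ)
    (x v x' v' : ℝ → H) : Prop where
  subdiff : ∀ t ∈ Set.Icc (0:ℝ) T, IsSubdiff φ (x t) (v t)
  xint : IntegrableOn x' (Set.Icc 0 T)
  vint : IntegrableOn v' (Set.Icc 0 T)
  xrep : ∀ t ∈ Set.Icc (0:ℝ) T, x t = x 0 + ∫ s in (0:ℝ)..t, x' s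
  vrep : ∀ t ∈ Set.Icc (0:ℝ) T, v t = v 0 + ∫ s in (0:ℝ)..t, v' s
  xderiv : ∀ᵐ t ∂(volume.restrict (Set.Ioo 0 T)), HasDerivAt x (x' t) t
  vderiv : ∀ᵐ t ∂(volume.restrict (Set.Ioo 0 T)), HasDerivAt v (v' t) t
  eqn : ∀ᵐ t ∂(volume.restrict (Set.Ioo 0 T)),
      lam t • x' t + v' t + v t + ψ' (x t) = 0

open scoped RealInnerProductSpace Interval

/-! The a.e. inequality `‖v̇‖² + 2⟪v, v̇⟫ ≤ ‖∇ψ(x)‖²` comes from pairing the equation with `v̇`: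
monotonicity of `∂φ` along the trajectory gives `⟪ẋ, v̇⟫ ≥ 0`, and Young's inequality handles
`⟪∇ψ(x), v̇⟫`. Integrating it needs the chain rule `‖v(t)‖² - ‖v(0)‖² = ∫ 2⟪v, v̇⟫`, which holds
because `‖v‖²` is absolutely continuous, and integrability of `‖∇ψ(x)‖²`, which holds because the
gradient of a differentiable convex function is continuous. -/

section ConvexOn

variable {E : Type*} [NormedAddCommGroup E] [NormedSpace ℝ E] {f : E → ℝ}

theorem ConvexOn.apply_sub_le_of_hasFDerivAt (hf : ConvexOn ℝ univ f) {f' : E →L[ℝ] ℝ} {x : E}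
    (hx : HasFDerivAt f f' x) (y : E) : f' (y - x) ≤ f y - f x := by
  have hline : HasDerivAt (f ∘ AffineMap.lineMap (k := ℝ) x y) (f' (y - x)) 0 := by
    have hx' : HasFDerivAt f f' (AffineMap.lineMap x y (0 : ℝ)) := by simpa using hx
    exact hx'.comp_hasDerivAt (0 : ℝ) AffineMap.hasDerivAt_lineMap
  simpa [slope] using (hf.comp_affineMap (AffineMap.lineMap x y)).le_slope_of_hasDerivAt
    (mem_univ 0) (mem_univ 1) zero_lt_one hline

theorem ContinuousLinearMap.norm_le_of_forall_norm_eq_le {A : E →L[ℝ] ℝ} {δ M : ℝ}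
    (hδ : 0 < δ) (hM : 0 ≤ M) (h : ∀ u, ‖u‖ = δ → A u ≤ M) : ‖A‖ ≤ M / δ := by
  refine A.opNorm_le_of_unit_norm (by positivity) fun u hu ↦ ?_
  have hδu : ‖δ • u‖ = δ := by rw [norm_smul, hu, Real.norm_of_nonneg hδ.le, mul_one]
  have hpos := h _ hδu
  have hneg := h (-(δ • u)) (by rw [norm_neg, hδu])
  rw [map_smul, smul_eq_mul] at hpos
  rw [map_neg, map_smul, smul_eq_mul] at hneg
  rw [Real.norm_eq_abs, le_div_iff₀ hδ, mul_comm, ← abs_of_pos hδ, ← abs_mul, abs_le]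
  constructor <;> linarith

/- For `‖h‖ = δ`, the gradient inequality at `y` gives
`(f' y - f' p) h ≤ (f (y + h) - f (p + h)) + (f p - f y) + (f (p + h) - f p - f' p h)`:
the first two terms are `O(‖y - p‖)` by local Lipschitz continuity, the last is `o(δ)`. -/
theorem ConvexOn.continuous_of_hasFDerivAt (hf : ConvexOn ℝ univ f) {f' : E → E →L[ℝ] ℝ}
    (hd : ∀ x, HasFDerivAt f (f' x) x) : Continuous f' := by
  have hcont : Continuous f := continuous_iff_continuousAt.2 fun x ↦ (hd x).continuousAt
  refine continuous_iff_continuousAt.2 fun p ↦ Metric.continuousAt_iff.2 fun ε hε ↦ ?_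
  obtain ⟨K, U, hU, hK⟩ :=
    (hf.locallyLipschitzOn_iff_continuousOn isOpen_univ).2 hcont.continuousOn (mem_univ p)
  rw [nhdsWithin_univ] at hU
  obtain ⟨r, hr, hball⟩ := Metric.eventually_nhds_iff_ball.1
    ((show ∀ᶠ z in 𝓝 p, z ∈ U from hU).and ((hd p).isLittleO.def (c := ε / 4) (by positivity)))
  simp only [Metric.mem_ball, dist_eq_norm] at hball
  have hLip : ∀ a b, ‖a - p‖ < r → ‖b - p‖ < r → f a - f b ≤ K * ‖a - b‖ := by
    intro a b ha hb
    have := hK.dist_le_mul a (hball a ha).1 b (hball b hb).1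
    rw [Real.dist_eq, dist_eq_norm] at this
    exact (le_abs_self _).trans this
  set δ := r / 2 with hδr
  have hδ : 0 < δ := by positivity
  refine ⟨min δ (ε * δ / (4 * K + 1)), by positivity, fun {y} hy ↦ ?_⟩
  rw [dist_eq_norm] at hy ⊢
  have hyδ : ‖y - p‖ < δ := hy.trans_le (min_le_left _ _)
  have hyK : 2 * K * ‖y - p‖ ≤ ε * δ / 2 := by
    have := hy.le.trans (min_le_right _ _)
    rw [le_div_iff₀ (by positivity)] at this
    nlinarith [norm_nonneg (y - p), K.coe_nonneg]
  have key : ∀ h, ‖h‖ = δ → (f' y - f' p) h ≤ 2 * K * ‖y - p‖ + ε / 4 * δ := by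
    intro h hh
    have hyh : ‖y + h - p‖ < r := by
      calc ‖y + h - p‖ = ‖(y - p) + h‖ := by rw [add_sub_right_comm]
        _ ≤ ‖y - p‖ + ‖h‖ := norm_add_le _ _
        _ < r := by linarith
    have hph : ‖p + h - p‖ < r := by rw [add_sub_cancel_left]; linarith
    have hgrad := hf.apply_sub_le_of_hasFDerivAt (hd y) (y + h)
    have hLip₁ := hLip (y + h) (p + h) hyh hph
    have hLip₂ := hLip p y (by simpa using hr) (by linarith)
    have hsmall := (le_abs_self _).trans (hball (p + h) hph).2
    simp only [add_sub_cancel_left, add_sub_add_right_eq_sub, norm_sub_rev p y, hh]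
      at hgrad hLip₁ hLip₂ hsmall
    simp only [sub_apply]
    linarith
  calc ‖f' y - f' p‖ ≤ (2 * K * ‖y - p‖ + ε / 4 * δ) / δ :=
        ContinuousLinearMap.norm_le_of_forall_norm_eq_le hδ (by positivity) key
    _ ≤ (ε * δ / 2 + ε / 4 * δ) / δ := by gcongr
    _ < ε := by rw [div_lt_iff₀ hδ]; nlinarith [mul_pos hε hδ]

end ConvexOn

theorem ConvexOn.continuous_of_hasGradientAt {ψ : H → ℝ} {ψ' : H → H} (hψ : ConvexOn ℝ univ ψ)
    (hd : ∀ x, HasGradientAt ψ (ψ' x) x) : Continuous ψ' := by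
  have := hψ.continuous_of_hasFDerivAt fun x ↦ (hd x).hasFDerivAt
  exact ((InnerProductSpace.toDual ℝ H).symm.continuous.comp this).congr fun x ↦ by simp

namespace AbsolutelyContinuousOnInterval

theorem of_dist_le_mul {X Y : Type*} [PseudoMetricSpace X] [PseudoMetricSpace Y]
    {f : ℝ → X} {g : ℝ → Y} {a b K : ℝ} (hg : AbsolutelyContinuousOnInterval g a b)
    (h : ∀ x ∈ uIcc a b, ∀ y ∈ uIcc a b, dist (f x) (f y) ≤ K * dist (g x) (g y)) :
    AbsolutelyContinuousOnInterval f a b := by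
  refine squeeze_zero' (Eventually.of_forall fun _ ↦ Finset.sum_nonneg fun _ _ ↦ dist_nonneg)
    ?_ (by simpa using Tendsto.const_mul K hg)
  filter_upwards [eventually_inf_principal.mpr (Eventually.of_forall fun _ h ↦ h)] with E hE
  rw [Finset.mul_sum]
  exact Finset.sum_le_sum fun i hi ↦ h _ (hE.1 i hi).1 _ (hE.1 i hi).2

theorem norm_sq {E : Type*} [SeminormedAddCommGroup E] {f : ℝ → E} {a b : ℝ}
    (hf : AbsolutelyContinuousOnInterval f a b) :
    AbsolutelyContinuousOnInterval (fun x ↦ ‖f x‖ ^ 2) a b := by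
  obtain ⟨M, hM⟩ := hf.exists_bound
  refine hf.of_dist_le_mul (K := 2 * M) fun x hx y hy ↦ ?_
  have hsum : |‖f x‖ + ‖f y‖| ≤ 2 * M := by
    rw [abs_of_nonneg (by positivity)]; linarith [hM x hx, hM y hy]
  rw [Real.dist_eq, sq_sub_sq, abs_mul, dist_eq_norm]
  exact mul_le_mul hsum (abs_norm_sub_norm_le _ _) (abs_nonneg _) (hsum.trans' (abs_nonneg _))

end AbsolutelyContinuousOnInterval

theorem IntervalIntegrable.absolutelyContinuousOnInterval_of_eq_add_integral
    {E : Type*} [NormedAddCommGroup E] [NormedSpace ℝ E] {w w' : ℝ → E} {a b : ℝ}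
    (hw' : IntervalIntegrable w' volume a b)
    (hrep : ∀ s ∈ uIcc a b, w s = w a + ∫ u in a..s, w' u) :
    AbsolutelyContinuousOnInterval w a b := by
  refine (hw'.norm.absolutelyContinuousOnInterval_intervalIntegral left_mem_uIcc).of_dist_le_mul
    (K := 1) fun x hx y hy ↦ ?_
  have hint : ∀ z ∈ uIcc a b, IntervalIntegrable w' volume a z := fun z hz ↦
    hw'.mono_set (uIcc_subset_uIcc_left hz)
  rw [one_mul, dist_eq_norm, Real.dist_eq, hrep x hx, hrep y hy, add_sub_add_left_eq_sub,
    intervalIntegral.integral_interval_sub_left (hint x hx) (hint y hy),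
    intervalIntegral.integral_interval_sub_left (hint x hx).norm (hint y hy).norm]
  exact intervalIntegral.norm_integral_le_abs_integral_norm

section InnerProductSpace

variable {F : Type*} [NormedAddCommGroup F] [InnerProductSpace ℝ F]

theorem IsSubdiff.ne_top {φ : F → EReal} (htop : ∃ z, φ z ≠ ⊤) {x v : F}
    (hv : IsSubdiff φ x v) : φ x ≠ ⊤ := by
  obtain ⟨z, hz⟩ := htop
  intro hx
  have := hv z
  rw [hx, EReal.top_add_coe, top_le_iff] at this
  exact hz this

theorem IsSubdiff.inner_sub_nonneg {φ : F → EReal} (hbot : ∀ z, φ z ≠ ⊥) (htop : ∃ z, φ z ≠ ⊤)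
    {x y u v : F} (hu : IsSubdiff φ x u) (hv : IsSubdiff φ y v) : 0 ≤ ⟪u - v, x - y⟫ := by
  have hx : φ x = ((φ x).toReal : EReal) := (EReal.coe_toReal (hu.ne_top htop) (hbot x)).symm
  have hy : φ y = ((φ y).toReal : EReal) := (EReal.coe_toReal (hv.ne_top htop) (hbot y)).symm
  have h₁ := hu y
  have h₂ := hv x
  rw [hx, hy, ← EReal.coe_add, EReal.coe_le_coe_iff] at h₁ h₂
  rw [← neg_sub x y, inner_neg_right] at h₁
  rw [inner_sub_left]
  linarith

theorem HasDerivAt.inner_nonneg_of_eventually_inner_sub_nonneg {f g : ℝ → F} {f' g' : F} {t : ℝ}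
    (hf : HasDerivAt f f' t) (hg : HasDerivAt g g' t)
    (h : ∀ᶠ s in 𝓝 t, 0 ≤ ⟪f s - f t, g s - g t⟫) : 0 ≤ ⟪f', g'⟫ := by
  refine ge_of_tendsto ((hasDerivAt_iff_tendsto_slope.1 hf).inner
    (hasDerivAt_iff_tendsto_slope.1 hg)) ?_
  filter_upwards [nhdsWithin_le_nhds h] with s hs
  rw [slope_def_module, slope_def_module, real_inner_smul_left, real_inner_smul_right,
    ← mul_assoc]
  exact mul_nonneg (mul_self_nonneg _) hs

theorem norm_sq_add_two_inner_le {lam : ℝ} {x' v' v g : F} (hlam : 0 ≤ lam)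
    (hmono : 0 ≤ ⟪x', v'⟫) (heq : lam • x' + v' + v + g = 0) :
    ‖v'‖ ^ 2 + 2 * ⟪v, v'⟫ ≤ ‖g‖ ^ 2 := by
  have hv : v = -(lam • x') - v' - g := by
    rw [← sub_eq_zero, ← heq]; abel
  have hcs : -⟪g, v'⟫ ≤ ‖g‖ * ‖v'‖ := (neg_le_abs _).trans (abs_real_inner_le_norm _ _)
  rw [hv, inner_sub_left, inner_sub_left, inner_neg_left, real_inner_smul_left,
    real_inner_self_eq_norm_sq]
  nlinarith [mul_nonneg hlam hmono, sq_nonneg (‖g‖ - ‖v'‖)]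

namespace AbsolutelyContinuousOnInterval

variable {w w' : ℝ → F} {a b : ℝ}

theorem deriv_norm_sq_ae_eq (hd : ∀ᵐ s ∂volume.restrict (Ι a b), HasDerivAt w (w' s) s) :
    deriv (fun s ↦ ‖w s‖ ^ 2) =ᵐ[volume.restrict (Ι a b)] fun s ↦ 2 * ⟪w s, w' s⟫ := by
  filter_upwards [hd] with s hs
  exact hs.norm_sq.deriv

theorem intervalIntegrable_two_inner (hw : AbsolutelyContinuousOnInterval w a b)
    (hd : ∀ᵐ s ∂volume.restrict (Ι a b), HasDerivAt w (w' s) s) :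
    IntervalIntegrable (fun s ↦ 2 * ⟪w s, w' s⟫) volume a b :=
  hw.norm_sq.intervalIntegrable_deriv.congr_ae (deriv_norm_sq_ae_eq hd)

theorem integral_two_inner (hw : AbsolutelyContinuousOnInterval w a b)
    (hd : ∀ᵐ s ∂volume.restrict (Ι a b), HasDerivAt w (w' s) s) :
    ∫ s in a..b, 2 * ⟪w s, w' s⟫ = ‖w b‖ ^ 2 - ‖w a‖ ^ 2 := by
  rw [← hw.norm_sq.integral_deriv_eq_sub]
  exact intervalIntegral.integral_congr_ae_restrict (deriv_norm_sq_ae_eq hd).symm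

theorem integral_norm_sq_add_norm_sq_le {q : ℝ → ℝ} (hab : a ≤ b)
    (hw : AbsolutelyContinuousOnInterval w a b)
    (hd : ∀ᵐ s ∂volume.restrict (Ι a b), HasDerivAt w (w' s) s)
    (hq : IntervalIntegrable q volume a b)
    (hle : ∀ᵐ s ∂volume.restrict (Ι a b), ‖w' s‖ ^ 2 + 2 * ⟪w s, w' s⟫ ≤ q s) :
    (∫ s in a..b, ‖w' s‖ ^ 2) + ‖w b‖ ^ 2 ≤ ‖w a‖ ^ 2 + ∫ s in a..b, q s := by
  have hinner := hw.intervalIntegrable_two_inner hd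
  have hmono : ∫ s in a..b, ‖w' s‖ ^ 2 ≤ ∫ s in a..b, (q s - 2 * ⟪w s, w' s⟫) := by
    rw [uIoc_of_le hab] at hle
    rw [intervalIntegral.integral_of_le hab, intervalIntegral.integral_of_le hab]
    -- `‖w'‖²` is not known to be integrable; `integral_mono_of_nonneg` does not ask for it.
    refine integral_mono_of_nonneg (Eventually.of_forall fun s ↦ sq_nonneg _)
      (hq.sub hinner).1 ?_
    filter_upwards [hle] with s hs
    linarith
  rw [intervalIntegral.integral_sub hq hinner, hw.integral_two_inner hd] at hmono
  linarith

end AbsolutelyContinuousOnInterval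

namespace StrongSol

variable {φ : F → EReal} {ψ' : F → F} {lam : ℝ → ℝ} {T : ℝ} {x v x' v' : ℝ → F}

theorem absolutelyContinuousOnInterval (sol : StrongSol φ ψ' lam T x v x' v') {t : ℝ}
    (ht0 : 0 ≤ t) (htT : t ≤ T) :
    AbsolutelyContinuousOnInterval x 0 t ∧ AbsolutelyContinuousOnInterval v 0 t := by
  have hsub : uIcc 0 t ⊆ Icc 0 T := by
    rw [uIcc_of_le ht0]; exact Icc_subset_Icc_right htT
  exact ⟨(sol.xint.mono_set hsub).intervalIntegrable
      |>.absolutelyContinuousOnInterval_of_eq_add_integral fun s hs ↦ sol.xrep s (hsub hs),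
    (sol.vint.mono_set hsub).intervalIntegrable
      |>.absolutelyContinuousOnInterval_of_eq_add_integral fun s hs ↦ sol.vrep s (hsub hs)⟩

theorem norm_sq_add_two_inner_le_ae (sol : StrongSol φ ψ' lam T x v x' v')
    (hbot : ∀ z, φ z ≠ ⊥) (htop : ∃ z, φ z ≠ ⊤) (hlam : ∀ t ∈ Icc 0 T, 0 ≤ lam t) :
    ∀ᵐ τ ∂volume.restrict (Ioo 0 T), ‖v' τ‖ ^ 2 + 2 * ⟪v τ, v' τ⟫ ≤ ‖ψ' (x τ)‖ ^ 2 := by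
  filter_upwards [sol.xderiv, sol.vderiv, sol.eqn, ae_restrict_mem measurableSet_Ioo]
    with τ hxd hvd heqn hτ
  have hmono : 0 ≤ ⟪x' τ, v' τ⟫ := by
    refine hxd.inner_nonneg_of_eventually_inner_sub_nonneg hvd ?_
    filter_upwards [isOpen_Ioo.mem_nhds hτ] with s hs
    rw [real_inner_comm]
    exact (sol.subdiff s (Ioo_subset_Icc_self hs)).inner_sub_nonneg hbot htop
      (sol.subdiff τ (Ioo_subset_Icc_self hτ))
  exact norm_sq_add_two_inner_le (hlam τ (Ioo_subset_Icc_self hτ)) hmono heqn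

end StrongSol

end InnerProductSpace

theorem stmt19_general (φ : H → EReal) (ψ : H → ℝ) (ψ' : H → H) (hst : Standing φ ψ ψ')
    (lam : ℝ → ℝ) (T c₀ : ℝ) (hc₀ : 0 < c₀)
    (hlam : ∀ t ∈ Set.Icc (0:ℝ) T, c₀ ≤ lam t)
    (x v x' v' : ℝ → H) (v₀ : H) (hv0 : v 0 = v₀)
    (sol : StrongSol φ ψ' lam T x v x' v') :
    ∀ t ∈ Set.Icc (0:ℝ) T,
      (∫ τ in (0:ℝ)..t, ‖v' τ‖ ^ 2) + ‖v t‖ ^ 2 ≤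
        ‖v₀‖ ^ 2 + ∫ τ in (0:ℝ)..T, ‖ψ' (x τ)‖ ^ 2 := by
  obtain ⟨⟨hbot, htop, -, -⟩, hψ, hgrad, -⟩ := hst
  have hpt := sol.norm_sq_add_two_inner_le_ae hbot htop fun τ hτ ↦ hc₀.le.trans (hlam τ hτ)
  intro t ⟨ht0, htT⟩
  have hQ : ContinuousOn (fun τ ↦ ‖ψ' (x τ)‖ ^ 2) (uIcc 0 T) :=
    ((hψ.continuous_of_hasGradientAt hgrad).comp_continuousOn
      (sol.absolutelyContinuousOnInterval (ht0.trans htT) le_rfl).1.continuousOn).norm.pow 2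
  have hae : ∀ {P : ℝ → Prop}, (∀ᵐ τ ∂volume.restrict (Ioo 0 T), P τ) →
      ∀ᵐ τ ∂volume.restrict (Ι 0 t), P τ := fun h ↦ by
    rw [uIoc_of_le ht0, ← Measure.restrict_congr_set Ioo_ae_eq_Ioc]
    exact ae_restrict_of_ae_restrict_of_subset (Ioo_subset_Ioo_right htT) h
  have hQt : IntervalIntegrable (fun τ ↦ ‖ψ' (x τ)‖ ^ 2) volume 0 t :=
    (hQ.mono (uIcc_subset_uIcc_left (Icc_subset_uIcc ⟨ht0, htT⟩))).intervalIntegrable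
  calc (∫ τ in (0:ℝ)..t, ‖v' τ‖ ^ 2) + ‖v t‖ ^ 2
      ≤ ‖v 0‖ ^ 2 + ∫ τ in (0:ℝ)..t, ‖ψ' (x τ)‖ ^ 2 :=
        (sol.absolutelyContinuousOnInterval ht0 htT).2.integral_norm_sq_add_norm_sq_le ht0
          (hae sol.vderiv) hQt (hae hpt)
    _ ≤ ‖v₀‖ ^ 2 + ∫ τ in (0:ℝ)..T, ‖ψ' (x τ)‖ ^ 2 := by
        rw [hv0]
        gcongr
        exact intervalIntegral.integral_mono_interval le_rfl ht0 htT
          (Eventually.of_forall fun _ ↦ sq_nonneg _) hQ.intervalIntegrable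

theorem stmt19 (φ : H → EReal) (ψ : H → ℝ) (ψ' : H → H) (hst : Standing φ ψ ψ')
    (lam : ℝ → ℝ) (T c₀ : ℝ) (hT : 0 < T) (hc₀ : 0 < c₀)
    (hlam : ∀ t ∈ Set.Icc (0:ℝ) T, c₀ ≤ lam t)
    (x v x' v' : ℝ → H) (x₀ v₀ : H) (hx0 : x 0 = x₀) (hv0 : v 0 = v₀)
    (hv₀ : IsSubdiff φ x₀ v₀)
    (sol : StrongSol φ ψ' lam T x v x' v') :
    ∀ t ∈ Set.Icc (0:ℝ) T,
      (∫ τ in (0:ℝ)..t, ‖v' τ‖ ^ 2) + ‖v t‖ ^ 2 ≤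
        ‖v₀‖ ^ 2 + ∫ τ in (0:ℝ)..T, ‖ψ' (x τ)‖ ^ 2 :=
  stmt19_general φ ψ ψ' hst lam T c₀ hc₀ hlam x v x' v' v₀ hv0 sol
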